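/- arXiv:2003.04201 — 4 statements merged into one kernel-verified Lean document; each statement's English description precedes it below -/
import Mathlib

section
/- Let g : ℝ^d → ℝ ∪ {+∞} be a proper, convex, lower semicontinuous function and let f : ℝ^d → ℝ be a convex differentiable function whose gradient ∇f is L-Lipschitz (L > 0). Let (α_k)_{k∈ℕ} be a sequence of stepsizes with 0 < α_k ≤ 1/L for all k, and let (x_k)_{k∈ℕ} satisfy x_{k+1} = prox_{α_k g}(x_k − α_k ∇f(x_k)) for all k ≥ 0. Then the sequence (x_k)_{k∈ℕ} is self-contracted. -/
/-!
Write `F = f + g`. The prox optimality condition, the descent lemma for the `L`-Lipschitz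
gradient (where `α_k ≤ 1/L` enters) and the gradient inequality of the convex `f` combine into
`F(x_{k+1}) + ‖z - x_{k+1}‖² / (2α_k) ≤ F(z) + ‖z - x_k‖² / (2α_k)` for every `z` in the domain
of `g`. Taking `z = x_k` shows that `F` decreases along the iterates (from index `1` on: `x_0`
need not lie in the domain of `g`); taking `z = x_m` with `m > k` then forces
`‖x_m - x_{k+1}‖ ≤ ‖x_m - x_k‖`, and chaining these one-step contractions gives the claim.
-/

open scoped InnerProductSpace

/-- A sequence `x : ℕ → ℝ^d` is self-contracted if for all `k₁ ≤ k₂ ≤ k₃`,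
`‖x k₃ - x k₂‖ ≤ ‖x k₃ - x k₁‖`. -/
def SelfContracted {d : ℕ} (x : ℕ → EuclideanSpace ℝ (Fin d)) : Prop :=
  ∀ k₁ k₂ k₃ : ℕ, k₁ ≤ k₂ → k₂ ≤ k₃ → ‖x k₃ - x k₂‖ ≤ ‖x k₃ - x k₁‖

/-- Convexity for an extended-real-valued function. -/
def ERealConvex {d : ℕ} (g : EuclideanSpace ℝ (Fin d) → EReal) : Prop :=
  ∀ x y : EuclideanSpace ℝ (Fin d), ∀ a b : ℝ, 0 ≤ a → 0 ≤ b → a + b = 1 →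
    g (a • x + b • y) ≤ (a : EReal) * g x + (b : EReal) * g y

/-- `g` is proper: it never takes the value `⊥` and is not identically `⊤`. -/
def ERealProper {d : ℕ} (g : EuclideanSpace ℝ (Fin d) → EReal) : Prop :=
  (∀ x, g x ≠ ⊥) ∧ (∃ x, g x ≠ ⊤)

/-- `p = prox_{αg}(y)`, i.e. `p` minimizes `z ↦ g z + (1/(2α))‖z - y‖²`
(for proper convex lsc `g` such a minimizer is unique). -/
def IsProx {d : ℕ} (g : EuclideanSpace ℝ (Fin d) → EReal) (α : ℝ)
    (y p : EuclideanSpace ℝ (Fin d)) : Prop :=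
  ∀ z, g p + ((1 / (2 * α) * ‖p - y‖ ^ 2 : ℝ) : EReal)
      ≤ g z + ((1 / (2 * α) * ‖z - y‖ ^ 2 : ℝ) : EReal)

open Set Filter Topology

section Smooth

variable {E : Type*} [NormedAddCommGroup E] [InnerProductSpace ℝ E] [CompleteSpace E]
  {f : E → ℝ} {f' : E → E}

theorem HasGradientAt.comp_hasDerivAt {g : E} {γ : ℝ → E} {γ' : E} {t : ℝ}
    (hf : HasGradientAt f g (γ t)) (hγ : HasDerivAt γ γ' t) :
    HasDerivAt (f ∘ γ) ⟪g, γ'⟫_ℝ t := by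
  simpa using (hasGradientAt_iff_hasFDerivAt.mp hf).comp_hasDerivAt t hγ

theorem hasDerivAt_comp_add_smul (hf : ∀ u, HasGradientAt f (f' u) u) (x v : E) (t : ℝ) :
    HasDerivAt (fun s : ℝ => f (x + s • v)) ⟪f' (x + t • v), v⟫_ℝ t := by
  have hline : HasDerivAt (fun s : ℝ => x + s • v) v t := by
    simpa using ((hasDerivAt_id t).smul_const v).const_add x
  exact (hf _).comp_hasDerivAt hline

theorem ConvexOn.add_inner_gradient_le (hconv : ConvexOn ℝ univ f) {x : E}
    (hf : HasGradientAt f (f' x) x) (z : E) :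
    f x + ⟪f' x, z - x⟫_ℝ ≤ f z := by
  set γ : ℝ →ᵃ[ℝ] E := AffineMap.lineMap x z
  have hline : HasDerivAt (f ∘ γ) ⟪f' x, z - x⟫_ℝ 0 :=
    (by simpa [γ] using hf : HasGradientAt f (f' x) (γ 0)).comp_hasDerivAt
      AffineMap.hasDerivAt_lineMap
  have := (hconv.comp_affineMap γ).le_slope_of_hasDerivAt
    (mem_univ _) (mem_univ _) zero_lt_one hline
  simp only [slope_def_field, Function.comp_apply, AffineMap.lineMap_apply_one,
    AffineMap.lineMap_apply_zero, sub_zero, div_one, γ] at this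
  linarith

theorem le_add_inner_gradient_add_sq {L : ℝ} (hf : ∀ u, HasGradientAt f (f' u) u) {x : E}
    (hlip : ∀ u, ‖f' u - f' x‖ ≤ L * ‖u - x‖) (y : E) :
    f y ≤ f x + ⟪f' x, y - x⟫_ℝ + L / 2 * ‖y - x‖ ^ 2 := by
  set v := y - x
  set ψ : ℝ → ℝ := fun t => f (x + t • v) - t * ⟪f' x, v⟫_ℝ - L / 2 * ‖v‖ ^ 2 * t ^ 2
  have hψ : ∀ t, HasDerivAt ψ (⟪f' (x + t • v) - f' x, v⟫_ℝ - L * ‖v‖ ^ 2 * t) t := by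
    intro t
    refine (((hasDerivAt_comp_add_smul hf x v t).sub (hasDerivAt_mul_const _)).sub
      ((hasDerivAt_pow 2 t).const_mul (L / 2 * ‖v‖ ^ 2))).congr_deriv ?_
    rw [inner_sub_left]; ring
  have hψ_nonpos : ∀ t ∈ interior (Ici (0 : ℝ)),
      ⟪f' (x + t • v) - f' x, v⟫_ℝ - L * ‖v‖ ^ 2 * t ≤ 0 := by
    intro t ht
    rw [interior_Ici, mem_Ioi] at ht
    have hgrad : ‖f' (x + t • v) - f' x‖ ≤ L * (t * ‖v‖) := by
      simpa [norm_smul, abs_of_pos ht] using hlip (x + t • v)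
    refine sub_nonpos.mpr ?_
    calc ⟪f' (x + t • v) - f' x, v⟫_ℝ ≤ ‖f' (x + t • v) - f' x‖ * ‖v‖ := real_inner_le_norm _ _
      _ ≤ L * (t * ‖v‖) * ‖v‖ := by gcongr
      _ = L * ‖v‖ ^ 2 * t := by ring
  have hanti : AntitoneOn ψ (Ici 0) :=
    antitoneOn_of_hasDerivWithinAt_nonpos (convex_Ici 0)
      (fun t _ => (hψ t).continuousAt.continuousWithinAt)
      (fun t _ => (hψ t).hasDerivWithinAt) hψ_nonpos
  have h10 : ψ 1 ≤ ψ 0 := hanti (mem_Ici.2 le_rfl) (mem_Ici.2 zero_le_one) zero_le_one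
  simp only [ψ, v, one_smul, zero_smul, add_zero, add_sub_cancel, one_mul, one_pow, mul_one,
    zero_mul, sub_zero, zero_pow two_ne_zero, mul_zero] at h10
  linarith

end Smooth

theorem le_of_forall_le_add_mul {a b c : ℝ} (h : ∀ t ∈ Ioc (0 : ℝ) 1, a ≤ b + t * c) : a ≤ b := by
  have hlim : Tendsto (fun t : ℝ => b + t * c) (𝓝[>] 0) (𝓝 b) := by
    refine (Continuous.tendsto' ?_ 0 b (by simp)).mono_left nhdsWithin_le_nhds
    fun_prop
  exact ge_of_tendsto hlim (eventually_of_mem (Ioc_mem_nhdsGT zero_lt_one) h)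

section Prox

variable {d : ℕ} {g : EuclideanSpace ℝ (Fin d) → EReal} {α : ℝ}
  {y p : EuclideanSpace ℝ (Fin d)}

theorem IsProx.ne_top (hp : IsProx g α y p) {z : EuclideanSpace ℝ (Fin d)} (hz : g z ≠ ⊤) :
    g p ≠ ⊤ := by
  intro htop
  have h := hp z
  rw [htop, EReal.top_add_coe, top_le_iff] at h
  exact EReal.add_lt_top hz (EReal.coe_ne_top _) |>.ne h

theorem IsProx.le_add_inner (hg : ERealConvex g) (hp : IsProx g α y p)
    {z : EuclideanSpace ℝ (Fin d)} {b c : ℝ} (hb : g p = b) (hc : g z = c) :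
    b ≤ c + α⁻¹ * ⟪p - y, z - p⟫_ℝ := by
  refine le_of_forall_le_add_mul (c := (2 * α)⁻¹ * ‖z - p‖ ^ 2) fun t ⟨ht0, ht1⟩ => ?_
  set w := p + t • (z - p)
  have hw : g w ≤ (((1 - t) * b + t * c : ℝ) : EReal) := by
    have h := hg p z (1 - t) t (by linarith) ht0.le (by ring)
    rwa [hb, hc, ← EReal.coe_mul, ← EReal.coe_mul, ← EReal.coe_add,
      show (1 - t) • p + t • z = w by simp only [w, smul_sub, sub_smul, one_smul]; abel] at h
  have hmin : b + 1 / (2 * α) * ‖p - y‖ ^ 2 ≤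
      (1 - t) * b + t * c + 1 / (2 * α) * ‖w - y‖ ^ 2 := by
    rw [← EReal.coe_le_coe_iff, EReal.coe_add, EReal.coe_add, ← hb]
    exact (hp w).trans (add_le_add_left hw _)
  have hexpand : ‖w - y‖ ^ 2 = ‖p - y‖ ^ 2 + 2 * t * ⟪p - y, z - p⟫_ℝ + t ^ 2 * ‖z - p‖ ^ 2 := by
    rw [show w - y = (p - y) + t • (z - p) by simp only [w]; abel, norm_add_sq_real,
      real_inner_smul_right, norm_smul, Real.norm_of_nonneg ht0.le]
    ring
  rw [hexpand] at hmin
  have : t * b ≤ t * (c + α⁻¹ * ⟪p - y, z - p⟫_ℝ + t * ((2 * α)⁻¹ * ‖z - p‖ ^ 2)) := by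
    linear_combination hmin
  exact le_of_mul_le_mul_left this ht0

theorem IsProx.proxGrad_le
    {f : EuclideanSpace ℝ (Fin d) → ℝ} {f' : EuclideanSpace ℝ (Fin d) → EuclideanSpace ℝ (Fin d)}
    {L : ℝ} {x z : EuclideanSpace ℝ (Fin d)} {b c : ℝ}
    (hg : ERealConvex g) (hf_convex : ConvexOn ℝ univ f) (hf : ∀ u, HasGradientAt f (f' u) u)
    (hlip : ∀ u, ‖f' u - f' x‖ ≤ L * ‖u - x‖) (hα : 0 < α) (hLα : L * α ≤ 1)
    (hp : IsProx g α (x - α • f' x) p) (hb : g p = b) (hc : g z = c) :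
    f p + b + 1 / (2 * α) * ‖z - p‖ ^ 2 ≤ f z + c + 1 / (2 * α) * ‖z - x‖ ^ 2 := by
  have hprox := hp.le_add_inner hg hb hc
  have hdescent := le_add_inner_gradient_add_sq hf hlip p
  have hsupport := hf_convex.add_inner_gradient_le (hf x) z
  have hstepsize : L / 2 * ‖p - x‖ ^ 2 ≤ 1 / (2 * α) * ‖p - x‖ ^ 2 := by
    refine mul_le_mul_of_nonneg_right ?_ (sq_nonneg _)
    rw [le_div_iff₀ (by positivity)]
    linarith
  have hsplit : ⟪p - (x - α • f' x), z - p⟫_ℝ = ⟪p - x, z - p⟫_ℝ + α * ⟪f' x, z - p⟫_ℝ := by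
    rw [show p - (x - α • f' x) = (p - x) + α • f' x by abel, inner_add_left,
      real_inner_smul_left]
  have hgrad : ⟪f' x, z - p⟫_ℝ + ⟪f' x, p - x⟫_ℝ = ⟪f' x, z - x⟫_ℝ := by
    rw [← inner_add_right, sub_add_sub_cancel]
  have hthree : 2 * ⟪p - x, z - p⟫_ℝ = ‖z - x‖ ^ 2 - ‖z - p‖ ^ 2 - ‖p - x‖ ^ 2 := by
    rw [← sub_add_sub_cancel z p x, norm_add_sq_real, real_inner_comm]
    ring
  rw [hsplit, mul_add, inv_mul_cancel_left₀ hα.ne'] at hprox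
  linear_combination hprox + hdescent + hsupport + hstepsize + hgrad + (2 * α)⁻¹ * hthree

end Prox

section Sequence

variable {d : ℕ} {x : ℕ → EuclideanSpace ℝ (Fin d)}

theorem SelfContracted.of_norm_sub_succ_le (h : ∀ k m, k < m → ‖x m - x (k + 1)‖ ≤ ‖x m - x k‖) :
    SelfContracted x := by
  intro k₁ k₂ k₃ h₁₂ h₂₃
  induction k₂, h₁₂ using Nat.le_induction with
  | base => exact le_rfl
  | succ n _ ih => exact (h n k₃ h₂₃).trans (ih (Nat.le_of_succ_le h₂₃))

theorem SelfContracted.of_potential (F c : ℕ → ℝ) (hc : ∀ k, 0 < c k)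
    (h : ∀ k m, 1 ≤ m →
      F (k + 1) + c k * ‖x m - x (k + 1)‖ ^ 2 ≤ F m + c k * ‖x m - x k‖ ^ 2) :
    SelfContracted x := by
  have hanti : AntitoneOn F (Ici 1) := antitoneOn_nat_Ici_of_succ_le fun n hn => by
    have := h n n hn
    rw [sub_self, norm_zero] at this
    nlinarith [hc n]
  refine of_norm_sub_succ_le fun k m hkm => ?_
  have hF : F m ≤ F (k + 1) := hanti (mem_Ici.2 (Nat.le_add_left 1 k)) (mem_Ici.2 (by omega)) hkm
  have hsq : c k * ‖x m - x (k + 1)‖ ^ 2 ≤ c k * ‖x m - x k‖ ^ 2 := by linarith [h k m (by omega)]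
  exact pow_le_pow_iff_left₀ (norm_nonneg _) (norm_nonneg _) two_ne_zero |>.mp
    (le_of_mul_le_mul_left hsq (hc k))

end Sequence

theorem proxGrad_selfContracted_general {d : ℕ} {L : ℝ}
    (g : EuclideanSpace ℝ (Fin d) → EReal)
    (hg_proper : ERealProper g) (hg_convex : ERealConvex g)
    (f : EuclideanSpace ℝ (Fin d) → ℝ)
    (f' : EuclideanSpace ℝ (Fin d) → EuclideanSpace ℝ (Fin d))
    (hf_convex : ConvexOn ℝ Set.univ f)
    (hf_diff : ∀ x, HasGradientAt f (f' x) x)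
    (hf_lip : ∀ x y, ‖f' x - f' y‖ ≤ L * ‖x - y‖)
    (α : ℕ → ℝ) (hα : ∀ k, 0 < α k ∧ α k ≤ 1 / L)
    (x : ℕ → EuclideanSpace ℝ (Fin d))
    (hx : ∀ k, IsProx g (α k) (x k - α k • f' (x k)) (x (k + 1))) :
    SelfContracted x := by
  obtain ⟨hbot, z₀, hz₀⟩ := hg_proper
  have hLα : ∀ k, L * α k ≤ 1 := fun k => by
    obtain ⟨hαpos, hαL⟩ := hα k
    rwa [le_div_iff₀ (one_div_pos.mp (hαpos.trans_le hαL)), mul_comm] at hαL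
  have hfinite : ∀ m, 1 ≤ m → g (x m) = (g (x m)).toReal := by
    rintro (_ | k) hm
    · omega
    · exact (EReal.coe_toReal ((hx k).ne_top hz₀) (hbot _)).symm
  refine SelfContracted.of_potential (fun k => f (x k) + (g (x k)).toReal)
    (fun k => 1 / (2 * α k)) (fun k => by have := (hα k).1; positivity) fun k m hm => ?_
  exact (hx k).proxGrad_le hg_convex hf_convex hf_diff (fun u => hf_lip u (x k)) (hα k).1
    (hLα k) (hfinite (k + 1) k.succ_pos) (hfinite m hm)

/-- The iterates of the proximal-gradient method with stepsizes `0 < α_k ≤ 1/L`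
form a self-contracted sequence. -/
theorem proxGrad_selfContracted {d : ℕ} {L : ℝ} (hL : 0 < L)
    (g : EuclideanSpace ℝ (Fin d) → EReal)
    (hg_proper : ERealProper g) (hg_convex : ERealConvex g)
    (hg_lsc : LowerSemicontinuous g)
    (f : EuclideanSpace ℝ (Fin d) → ℝ)
    (f' : EuclideanSpace ℝ (Fin d) → EuclideanSpace ℝ (Fin d))
    (hf_convex : ConvexOn ℝ Set.univ f)
    (hf_diff : ∀ x, HasGradientAt f (f' x) x)
    (hf_lip : ∀ x y, ‖f' x - f' y‖ ≤ L * ‖x - y‖)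
    (α : ℕ → ℝ) (hα : ∀ k, 0 < α k ∧ α k ≤ 1 / L)
    (x : ℕ → EuclideanSpace ℝ (Fin d))
    (hx : ∀ k, IsProx g (α k) (x k - α k • f' (x k)) (x (k + 1))) :
    SelfContracted x :=
  proxGrad_selfContracted_general g hg_proper hg_convex f f' hf_convex hf_diff hf_lip α hα x hx
end

section
/- Let g : ℝ^d → ℝ ∪ {+∞} be a proper, convex, lower semicontinuous function and let (α_k)_{k∈ℕ} be any sequence of positive real numbers. Then for any x₀ ∈ ℝ^d, the proximal-point sequence defined by x_{k+1} = prox_{α_k g}(x_k) for all k ≥ 0 is self-contracted. -/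
open scoped RealInnerProductSpace

section Projection

variable {F : Type*} [NormedAddCommGroup F] [InnerProductSpace ℝ F]

theorem real_inner_le_zero_of_forall_norm_sub_le {K : Set F} (hK : Convex ℝ K) {u v : F}
    (hv : v ∈ K) (hmin : ∀ w ∈ K, ‖u - v‖ ≤ ‖u - w‖) : ∀ w ∈ K, ⟪u - v, w - v⟫ ≤ 0 := by
  have : Nonempty K := ⟨⟨v, hv⟩⟩
  refine (norm_eq_iInf_iff_real_inner_le_zero hK hv).1 (le_antisymm ?_ ?_)
  · exact le_ciInf fun w => hmin w w.2
  · exact ciInf_le (f := fun w : K => ‖u - w‖)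
      ⟨0, Set.forall_mem_range.2 fun _ => norm_nonneg _⟩ ⟨v, hv⟩

theorem norm_sub_le_of_real_inner_le_zero {u v w : F} (h : ⟪u - v, w - v⟫ ≤ 0) :
    ‖w - v‖ ≤ ‖w - u‖ := by
  have hsq : ‖w - u‖ ^ 2 = ‖w - v‖ ^ 2 - 2 * ⟪u - v, w - v⟫ + ‖u - v‖ ^ 2 := by
    rw [show w - u = (w - v) - (u - v) by abel, norm_sub_sq_real, real_inner_comm]
  exact le_of_sq_le_sq (by nlinarith [sq_nonneg ‖u - v‖]) (norm_nonneg _)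

end Projection

variable {d : ℕ} {g : EuclideanSpace ℝ (Fin d) → EReal}

theorem ERealConvex.convex_setOf_le (hg : ERealConvex g) (c : ℝ) :
    Convex ℝ {w | g w ≤ c} := by
  intro x hx y hy a b ha hb hab
  calc g (a • x + b • y) ≤ (a : EReal) * g x + (b : EReal) * g y := hg x y a b ha hb hab
    _ ≤ (a : EReal) * c + (b : EReal) * c :=
      add_le_add (mul_le_mul_of_nonneg_left hx (EReal.coe_nonneg.2 ha))
        (mul_le_mul_of_nonneg_left hy (EReal.coe_nonneg.2 hb))
    _ = c := by
      norm_cast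
      rw [← add_mul, hab, one_mul]

namespace IsProx

variable {α : ℝ} {y p : EuclideanSpace ℝ (Fin d)}

theorem le_self (hp : IsProx g α y p) (hα : 0 < α) : g p ≤ g y := by
  have h := hp y
  rw [sub_self, norm_zero, zero_pow two_ne_zero, mul_zero, EReal.coe_zero, add_zero] at h
  exact le_trans (le_add_of_nonneg_right (EReal.coe_nonneg.2 (by positivity))) h

theorem ne_top_s9 (hp : IsProx g α y p) (hg : ∃ z, g z ≠ ⊤) : g p ≠ ⊤ := by
  obtain ⟨z, hz⟩ := hg
  intro htop
  have h := hp z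
  rw [htop, EReal.top_add_coe, top_le_iff] at h
  exact EReal.add_ne_top hz (EReal.coe_ne_top _) h

theorem norm_sub_le_of_le (hp : IsProx g α y p) (hα : 0 < α) {r : ℝ} (hpr : g p = r)
    {w : EuclideanSpace ℝ (Fin d)} (hw : g w ≤ r) : ‖y - p‖ ≤ ‖y - w‖ := by
  have h := (hp w).trans (add_le_add_left hw _)
  rw [hpr] at h
  have h' : 1 / (2 * α) * ‖p - y‖ ^ 2 ≤ 1 / (2 * α) * ‖w - y‖ ^ 2 :=
    (add_le_add_iff_left r).1 (by exact_mod_cast h)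
  rw [norm_sub_rev y p, norm_sub_rev y w]
  exact le_of_sq_le_sq (le_of_mul_le_mul_left h' (by positivity)) (norm_nonneg _)

theorem norm_sub_le (hp : IsProx g α y p) (hg : ERealConvex g) (hα : 0 < α)
    (htop : g p ≠ ⊤) (hbot : g p ≠ ⊥) {w : EuclideanSpace ℝ (Fin d)} (hw : g w ≤ g p) :
    ‖w - p‖ ≤ ‖w - y‖ := by
  set r := (g p).toReal
  have hpr : g p = r := (EReal.coe_toReal htop hbot).symm
  rw [hpr] at hw
  refine norm_sub_le_of_real_inner_le_zero ?_
  exact real_inner_le_zero_of_forall_norm_sub_le (hg.convex_setOf_le r) hpr.le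
    (fun _ hw' => hp.norm_sub_le_of_le hα hpr hw') w hw

end IsProx

theorem selfContracted_of_forall_lt {x : ℕ → EuclideanSpace ℝ (Fin d)}
    (h : ∀ k m, k < m → ‖x m - x (k + 1)‖ ≤ ‖x m - x k‖) : SelfContracted x := by
  intro k₁ k₂ k₃ h₁₂ h₂₃
  induction k₂, h₁₂ using Nat.le_induction with
  | base => exact le_rfl
  | succ n _ ih => exact (h n k₃ h₂₃).trans (ih (Nat.le_of_succ_le h₂₃))

theorem proximalPoint_selfContracted_general {d : ℕ}
    (g : EuclideanSpace ℝ (Fin d) → EReal)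
    (hg_proper : ERealProper g) (hg_convex : ERealConvex g)
    (α : ℕ → ℝ) (hα : ∀ k, 0 < α k)
    (x : ℕ → EuclideanSpace ℝ (Fin d))
    (hx : ∀ k, IsProx g (α k) (x k) (x (k + 1))) :
    SelfContracted x := by
  obtain ⟨hbot, hfin⟩ := hg_proper
  have hanti : Antitone (g ∘ x) := antitone_nat_of_succ_le fun k => (hx k).le_self (hα k)
  refine selfContracted_of_forall_lt fun k m hkm => ?_
  exact (hx k).norm_sub_le hg_convex (hα k) ((hx k).ne_top_s9 hfin) (hbot _) (hanti hkm)

/-- The proximal-point algorithm `x_{k+1} = prox_{α_k g}(x_k)` for a proper convex lsc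
function `g` generates a self-contracted sequence, for any positive stepsizes. -/
theorem proximalPoint_selfContracted {d : ℕ}
    (g : EuclideanSpace ℝ (Fin d) → EReal)
    (hg_proper : ERealProper g) (hg_convex : ERealConvex g)
    (hg_lsc : LowerSemicontinuous g)
    (α : ℕ → ℝ) (hα : ∀ k, 0 < α k)
    (x₀ : EuclideanSpace ℝ (Fin d))
    (x : ℕ → EuclideanSpace ℝ (Fin d)) (hx0 : x 0 = x₀)
    (hx : ∀ k, IsProx g (α k) (x k) (x (k + 1))) :
    SelfContracted x :=
  proximalPoint_selfContracted_general g hg_proper hg_convex α hα x hx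
end

section
/- Let f : ℝ^d → ℝ be a convex differentiable function whose gradient ∇f is L-Lipschitz, and let (α_k)_{k∈ℕ} be stepsizes with 0 < α_k ≤ 1/L for all k. Then for any x₀ ∈ ℝ^d, the gradient-descent sequence defined by x_{k+1} = x_k − α_k ∇f(x_k) for all k ≥ 0 is self-contracted. -/
open Set

theorem norm_sub_sub_smul_le_of_inner_le {E : Type*} [NormedAddCommGroup E]
    [InnerProductSpace ℝ E] {y a g : E} {α : ℝ} (hα : 0 ≤ α)
    (h : inner ℝ g (y - a) ≤ -(α / 2 * ‖g‖ ^ 2)) :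
    ‖y - (a - α • g)‖ ≤ ‖y - a‖ := by
  have hsq : ‖y - (a - α • g)‖ ^ 2 ≤ ‖y - a‖ ^ 2 := by
    have hsplit : y - (a - α • g) = (y - a) + α • g := by abel
    rw [hsplit, norm_add_sq_real, real_inner_smul_right, real_inner_comm, norm_smul, mul_pow,
      Real.norm_eq_abs, sq_abs]
    nlinarith
  exact (sq_le_sq₀ (norm_nonneg _) (norm_nonneg _)).1 hsq

section Gradient

variable {E : Type*} [NormedAddCommGroup E] [InnerProductSpace ℝ E] [CompleteSpace E] {f : E → ℝ}

theorem HasGradientAt.hasDerivAt_comp_lineMap {g a b : E} {t : ℝ}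
    (h : HasGradientAt f g (AffineMap.lineMap (k := ℝ) a b t)) :
    HasDerivAt (f ∘ AffineMap.lineMap (k := ℝ) a b) (inner ℝ g (b - a)) t :=
  h.hasFDerivAt.comp_hasDerivAt t AffineMap.hasDerivAt_lineMap

theorem ConvexOn.inner_gradient_le_sub (hf : ConvexOn ℝ univ f) {g a : E}
    (h : HasGradientAt f g a) (b : E) :
    inner ℝ g (b - a) ≤ f b - f a := by
  have hline : ConvexOn ℝ univ (f ∘ AffineMap.lineMap (k := ℝ) a b) := by
    simpa using hf.comp_affineMap (AffineMap.lineMap (k := ℝ) a b)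
  have hderiv : HasDerivAt (f ∘ AffineMap.lineMap (k := ℝ) a b) (inner ℝ g (b - a)) 0 :=
    HasGradientAt.hasDerivAt_comp_lineMap (by simpa using h)
  simpa [slope_def_field] using
    hline.le_slope_of_hasDerivAt (mem_univ _) (mem_univ _) zero_lt_one hderiv

theorem le_add_inner_add_sq_of_lipschitz_gradient {f' : E → E} {L : ℝ}
    (hf : ∀ y, HasGradientAt f (f' y) y) {a : E} (hlip : ∀ y, ‖f' y - f' a‖ ≤ L * ‖y - a‖)
    (b : E) :
    f b ≤ f a + inner ℝ (f' a) (b - a) + L / 2 * ‖b - a‖ ^ 2 := by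
  set ℓ : ℝ →ᵃ[ℝ] E := AffineMap.lineMap a b
  set v := b - a
  set c := inner ℝ (f' a) v
  have hderiv (t : ℝ) : HasDerivAt (f ∘ ℓ) (inner ℝ (f' (ℓ t)) v) t :=
    (hf _).hasDerivAt_comp_lineMap
  have hquad (t : ℝ) : HasDerivAt (fun t : ℝ => f a + t * c + L / 2 * t ^ 2 * ‖v‖ ^ 2)
      (c + L * t * ‖v‖ ^ 2) t := by
    refine ((((hasDerivAt_id t).mul_const c).const_add (f a)).add
      (((hasDerivAt_pow 2 t).const_mul (L / 2)).mul_const (‖v‖ ^ 2))).congr_deriv ?_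
    ring
  have hslope {t : ℝ} (ht : 0 ≤ t) : inner ℝ (f' (ℓ t)) v ≤ c + L * t * ‖v‖ ^ 2 := by
    have hdist : ℓ t - a = t • v := by
      simp [ℓ, AffineMap.lineMap_apply_module', v]
    calc inner ℝ (f' (ℓ t)) v = c + inner ℝ (f' (ℓ t) - f' a) v := by
          rw [inner_sub_left]; ring
      _ ≤ c + ‖f' (ℓ t) - f' a‖ * ‖v‖ := by
          gcongr; exact real_inner_le_norm _ _
      _ ≤ c + L * ‖t • v‖ * ‖v‖ := by
          gcongr; rw [← hdist]; exact hlip _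
      _ = c + L * t * ‖v‖ ^ 2 := by
          rw [norm_smul, Real.norm_of_nonneg ht]; ring
  have := image_le_of_deriv_right_le_deriv_boundary (a := 0) (b := 1)
    (fun t _ => (hderiv t).continuousAt.continuousWithinAt)
    (fun t _ => (hderiv t).hasDerivWithinAt) (by simp [ℓ])
    (fun t _ => (hquad t).continuousAt.continuousWithinAt)
    (fun t _ => (hquad t).hasDerivWithinAt) (fun t ht => hslope ht.1)
    (right_mem_Icc.2 zero_le_one)
  simpa [ℓ] using this

theorem apply_sub_smul_gradient_le {f' : E → E} {L α : ℝ}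
    (hf : ∀ y, HasGradientAt f (f' y) y) {a : E} (hlip : ∀ y, ‖f' y - f' a‖ ≤ L * ‖y - a‖)
    (hα : 0 ≤ α) (hαL : α * L ≤ 1) :
    f (a - α • f' a) ≤ f a - α / 2 * ‖f' a‖ ^ 2 := by
  have h := le_add_inner_add_sq_of_lipschitz_gradient hf hlip (a - α • f' a)
  rw [sub_sub_cancel_left, inner_neg_right, real_inner_smul_right, real_inner_self_eq_norm_sq,
    norm_neg, norm_smul, mul_pow, Real.norm_eq_abs, sq_abs] at h
  nlinarith [mul_nonneg (mul_nonneg hα (sq_nonneg ‖f' a‖)) (sub_nonneg.2 hαL)]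

end Gradient

theorem selfContracted_of_norm_sub_succ_le {d : ℕ} {x : ℕ → EuclideanSpace ℝ (Fin d)}
    (h : ∀ k n, k < n → ‖x n - x (k + 1)‖ ≤ ‖x n - x k‖) : SelfContracted x := by
  intro k₁ k₂ k₃ h₁₂ h₂₃
  induction k₂, h₁₂ using Nat.le_induction with
  | base => exact le_rfl
  | succ k _ ih => exact (h k k₃ h₂₃).trans (ih (Nat.le_of_succ_le h₂₃))

theorem gradientDescent_selfContracted_general {d : ℕ} {L : ℝ}
    (f : EuclideanSpace ℝ (Fin d) → ℝ)
    (f' : EuclideanSpace ℝ (Fin d) → EuclideanSpace ℝ (Fin d))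
    (hf_convex : ConvexOn ℝ Set.univ f)
    (hf_diff : ∀ y, HasGradientAt f (f' y) y)
    (hf_lip : ∀ x y, ‖f' x - f' y‖ ≤ L * ‖x - y‖)
    (α : ℕ → ℝ) (hα : ∀ k, 0 < α k ∧ α k ≤ 1 / L)
    (x : ℕ → EuclideanSpace ℝ (Fin d))
    (hx : ∀ k, x (k + 1) = x k - α k • f' (x k)) :
    SelfContracted x := by
  have hL : 0 < L := one_div_pos.1 ((hα 0).1.trans_le (hα 0).2)
  have hdecrease (k : ℕ) : f (x (k + 1)) ≤ f (x k) - α k / 2 * ‖f' (x k)‖ ^ 2 := by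
    rw [hx k]
    exact apply_sub_smul_gradient_le hf_diff (fun y => hf_lip y _) (hα k).1.le
      ((le_div_iff₀ hL).1 (hα k).2)
  have hanti : Antitone (f ∘ x) := antitone_nat_of_succ_le fun k =>
    (hdecrease k).trans (sub_le_self _ (mul_nonneg (half_pos (hα k).1).le (sq_nonneg _)))
  refine selfContracted_of_norm_sub_succ_le fun k n hkn => ?_
  rw [hx k]
  refine norm_sub_sub_smul_le_of_inner_le (hα k).1.le ?_
  calc inner ℝ (f' (x k)) (x n - x k) ≤ f (x n) - f (x k) :=
        hf_convex.inner_gradient_le_sub (hf_diff _) _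
    _ ≤ f (x (k + 1)) - f (x k) := by gcongr; exact hanti hkn
    _ ≤ -(α k / 2 * ‖f' (x k)‖ ^ 2) := by linarith [hdecrease k]

/-- Gradient descent on a convex function with L-Lipschitz gradient, with stepsizes
`0 < α_k ≤ 1/L`, generates a self-contracted sequence. -/
theorem gradientDescent_selfContracted {d : ℕ} {L : ℝ}
    (f : EuclideanSpace ℝ (Fin d) → ℝ)
    (f' : EuclideanSpace ℝ (Fin d) → EuclideanSpace ℝ (Fin d))
    (hf_convex : ConvexOn ℝ Set.univ f)
    (hf_diff : ∀ y, HasGradientAt f (f' y) y)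
    (hf_lip : ∀ x y, ‖f' x - f' y‖ ≤ L * ‖x - y‖)
    (α : ℕ → ℝ) (hα : ∀ k, 0 < α k ∧ α k ≤ 1 / L)
    (x₀ : EuclideanSpace ℝ (Fin d))
    (x : ℕ → EuclideanSpace ℝ (Fin d)) (hx0 : x 0 = x₀)
    (hx : ∀ k, x (k + 1) = x k - α k • f' (x k)) :
    SelfContracted x :=
  gradientDescent_selfContracted_general f f' hf_convex hf_diff hf_lip α hα x hx
end

section
/- Let A, B ⊆ ℝ^d be nonempty closed convex sets, let x₀ ∈ ℝ^d, and define the alternating-projection sequences y_{k+1} = P_A(x_k) and x_{k+1} = P_B(y_{k+1}) for all k ≥ 0. Then both sequences (x_k)_{k∈ℕ} and (y_k)_{k≥1} are self-contracted. -/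
/-- `p = P_A(x)`: `p` belongs to `A` and minimizes the distance to `x` over `A`
(for a nonempty closed convex set such a point is unique). -/
def IsProjOn {d : ℕ} (A : Set (EuclideanSpace ℝ (Fin d)))
    (x p : EuclideanSpace ℝ (Fin d)) : Prop :=
  p ∈ A ∧ ∀ a ∈ A, ‖x - p‖ ≤ ‖x - a‖

open scoped RealInnerProductSpace

/-!
Write `v k = P_A(u k)` and `u (k + 1) = P_B(v k)`. By the minimality of projections the
displacements `‖v k - u (k + 1)‖` are nonincreasing. For `k ≤ n`, combining the obtuse-angle
characterizations of `v k = P_A(u k)` (tested at `v n ∈ A`) and of `u (k + 1) = P_B(v k)`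
(tested at `u (n + 1) ∈ B`) with `‖v n - u (n + 1)‖ ≤ ‖v k - u (k + 1)‖` shows that `u (n + 1)`
is at least as close to `u (k + 1)` as to `u k`; iterating this one-step contraction gives
self-contractedness. The `y`-sequence is the `u`-sequence of the same scheme with `A` and `B`
exchanged.
-/

lemma IsProjOn.inner_sub_nonpos {d : ℕ} {C : Set (EuclideanSpace ℝ (Fin d))}
    (hC : Convex ℝ C) {x p : EuclideanSpace ℝ (Fin d)} (h : IsProjOn C x p) :
    ∀ a ∈ C, ⟪x - p, a - p⟫ ≤ 0 := by
  have : Nonempty C := ⟨⟨p, h.1⟩⟩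
  have hleast : IsLeast (Set.range fun w : C => ‖x - w‖) ‖x - p‖ :=
    ⟨⟨⟨p, h.1⟩, rfl⟩, by rintro _ ⟨w, rfl⟩; exact h.2 w w.2⟩
  exact (norm_eq_iInf_iff_real_inner_le_zero hC h.1).mp hleast.isGLB.ciInf_eq.symm

/-- Here `r = P_A(q)`, `p = P_B(r)`, `s ∈ A`, `z ∈ B`, as seen through the obtuse-angle
characterization of projections. -/
lemma norm_sub_le_norm_sub_of_inner_nonpos {E : Type*} [NormedAddCommGroup E]
    [InnerProductSpace ℝ E] {z p q r s : E}
    (hr : ⟪q - r, s - r⟫ ≤ 0) (hp : ⟪r - p, z - p⟫ ≤ 0) (hsz : ‖s - z‖ ≤ ‖r - p‖) :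
    ‖z - p‖ ≤ ‖z - q‖ := by
  have hcs : ⟪q - r, z - s⟫ ≤ ‖q - r‖ * ‖r - p‖ :=
    (real_inner_le_norm _ _).trans <| by
      rw [norm_sub_rev z s]; exact mul_le_mul_of_nonneg_left hsz (norm_nonneg _)
  have hinner : 2 * ⟪q - p, z - p⟫ ≤ ‖q - p‖ ^ 2 :=
    calc 2 * ⟪q - p, z - p⟫
        = 2 * ⟪q - r, z - s⟫ + 2 * ⟪q - r, s - r⟫ + 2 * ⟪q - r, r - p⟫
            + 2 * ⟪r - p, z - p⟫ := by
          simp only [inner_sub_left, inner_sub_right]; ring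
      _ ≤ 2 * (‖q - r‖ * ‖r - p‖) + 2 * ⟪q - r, r - p⟫ := by linarith
      _ ≤ ‖q - r‖ ^ 2 + 2 * ⟪q - r, r - p⟫ + ‖r - p‖ ^ 2 := by
          nlinarith [sq_nonneg (‖q - r‖ - ‖r - p‖)]
      _ = ‖q - p‖ ^ 2 := by rw [← norm_add_sq_real, sub_add_sub_cancel]
  have hsq : ‖z - q‖ ^ 2 = ‖z - p‖ ^ 2 - 2 * ⟪q - p, z - p⟫ + ‖q - p‖ ^ 2 := by
    rw [← sub_sub_sub_cancel_right z q p, norm_sub_sq_real, real_inner_comm]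
  exact (sq_le_sq₀ (norm_nonneg _) (norm_nonneg _)).mp (by linarith)

lemma selfContracted_of_norm_sub_succ_le_s12 {d : ℕ} {w : ℕ → EuclideanSpace ℝ (Fin d)}
    (hstep : ∀ k m, k < m → ‖w m - w (k + 1)‖ ≤ ‖w m - w k‖) :
    SelfContracted w := by
  intro k₁ k₂ k₃ h12 h23
  induction k₂, h12 using Nat.le_induction with
  | base => exact le_rfl
  | succ n _ ih => exact (hstep n k₃ h23).trans (ih (Nat.le_of_succ_le h23))

section AlternatingProjections

variable {d : ℕ} {A B : Set (EuclideanSpace ℝ (Fin d))} {u v : ℕ → EuclideanSpace ℝ (Fin d)}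

lemma antitone_norm_sub_of_alternating (hv : ∀ k, IsProjOn A (u k) (v k))
    (hu : ∀ k, IsProjOn B (v k) (u (k + 1))) :
    Antitone fun k => ‖v k - u (k + 1)‖ := by
  refine antitone_nat_of_succ_le fun k => ?_
  calc ‖v (k + 1) - u (k + 1 + 1)‖
      ≤ ‖v (k + 1) - u (k + 1)‖ := (hu (k + 1)).2 _ (hu k).1
    _ = ‖u (k + 1) - v (k + 1)‖ := norm_sub_rev _ _
    _ ≤ ‖u (k + 1) - v k‖ := (hv (k + 1)).2 _ (hv k).1
    _ = ‖v k - u (k + 1)‖ := norm_sub_rev _ _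

lemma selfContracted_of_alternating (hA : Convex ℝ A) (hB : Convex ℝ B)
    (hv : ∀ k, IsProjOn A (u k) (v k)) (hu : ∀ k, IsProjOn B (v k) (u (k + 1))) :
    SelfContracted u := by
  refine selfContracted_of_norm_sub_succ_le_s12 fun k m hkm => ?_
  obtain ⟨n, rfl⟩ : ∃ n, m = n + 1 := Nat.exists_eq_succ_of_ne_zero (by omega)
  exact norm_sub_le_norm_sub_of_inner_nonpos
    ((hv k).inner_sub_nonpos hA _ (hv n).1)
    ((hu k).inner_sub_nonpos hB _ (hu n).1)
    (antitone_norm_sub_of_alternating hv hu (Nat.le_of_lt_succ hkm))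

end AlternatingProjections

theorem alternatingProjections_selfContracted_general {d : ℕ}
    (A B : Set (EuclideanSpace ℝ (Fin d)))
    (hA_cv : Convex ℝ A)
    (hB_cv : Convex ℝ B)
    (x y : ℕ → EuclideanSpace ℝ (Fin d))
    (hy : ∀ k, IsProjOn A (x k) (y (k + 1)))
    (hx : ∀ k, IsProjOn B (y (k + 1)) (x (k + 1))) :
    SelfContracted x ∧ SelfContracted (fun k => y (k + 1)) :=
  ⟨selfContracted_of_alternating hA_cv hB_cv hy hx,
    selfContracted_of_alternating (v := fun k => x (k + 1)) hB_cv hA_cv hx fun k => hy (k + 1)⟩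

/-- Both sequences generated by the alternating projection method onto two nonempty
closed convex sets are self-contracted. -/
theorem alternatingProjections_selfContracted {d : ℕ}
    (A B : Set (EuclideanSpace ℝ (Fin d)))
    (hA_ne : A.Nonempty) (hA_cl : IsClosed A) (hA_cv : Convex ℝ A)
    (hB_ne : B.Nonempty) (hB_cl : IsClosed B) (hB_cv : Convex ℝ B)
    (x₀ : EuclideanSpace ℝ (Fin d))
    (x y : ℕ → EuclideanSpace ℝ (Fin d)) (hx0 : x 0 = x₀)
    (hy : ∀ k, IsProjOn A (x k) (y (k + 1)))
    (hx : ∀ k, IsProjOn B (y (k + 1)) (x (k + 1))) :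
    SelfContracted x ∧ SelfContracted (fun k => y (k + 1)) :=
  alternatingProjections_selfContracted_general A B hA_cv hB_cv x y hy hx
end
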